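/- The set of pairs (c_L, c_R) of series over X = {x₀, x₁} with c_L non-proper forms a group under the composition product c_δ ∘ d_δ = ((c_L ∘̃ d_δ)⧢d_L, (c_L ∘̃ d_δ)⧢d_R + c_R ∘̃ d_δ), with identity (1,0). The inverse (c_L^{∘-1}, c_R^{∘-1}) is the unique fixed point of the contraction S_R(e_L,e_R) = ((c_L ∘̃ (e_L,e_R))^{⧢-1}, −e_L ⧢ (c_R ∘̃ (e_L,e_R))). -/

import Mathlib

/-- Formal power series over the alphabet `X = {x₀, x₁}` (encoded as `Bool`,
with `x₀ = false` and `x₁ = true`). -/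
abbrev FPS := List Bool → ℝ

/-- The letter `x₀`. -/
def x₀ : Bool := false

/-- The letter `x₁`. -/
def x₁ : Bool := true

/-- Shuffle product of formal power series, via the left-quotient recursion. -/
noncomputable def shuffle : (List Bool → ℝ) → (List Bool → ℝ) → List Bool → ℝ
  | c, d, [] => c [] * d []
  | c, d, x :: w => shuffle (fun u => c (x :: u)) d w + shuffle c (fun u => d (x :: u)) w

/-- The series `1` (the empty word). -/
noncomputable def oneF : FPS := fun w => match w with | [] => 1 | _ => 0

/-- The series corresponding to a single word. -/
noncomputable def ind (η : List Bool) : FPS := fun w => if w = η then 1 else 0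

/-- Left catenation of the series `e` by a letter `x`: the series `x e`. -/
noncomputable def pre (x : Bool) (e : FPS) : FPS :=
  fun w => match w with
  | [] => 0
  | y :: u => if y = x then e u else 0

/-- The word-indexed family of endomorphisms `φ_d`, determined by
`φ_d(x₀)(e) = x₀ e` and `φ_d(x₁)(e) = x₁(d_L ⧢ e) + x₀(d_R ⧢ e)`. -/
noncomputable def phiW (d : FPS × FPS) : List Bool → FPS → FPS
  | [], e => e
  | x :: η, e =>
      if x then pre x₁ (shuffle d.1 (phiW d η e)) + pre x₀ (shuffle d.2 (phiW d η e))
      else pre x₀ (phiW d η e)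

/-- The mixed composition product `c ∘̃ d_δ = Σ_η (c,η) φ_d(η)(1)`.
(For each word `w` only the finitely many `η` with `|η| ≤ |w|` contribute.) -/
noncomputable def mixedComp (c : FPS) (d : FPS × FPS) : FPS :=
  fun w => ∑' η : List Bool, c η * phiW d η oneF w

/-- The composition product on pairs:
`c_δ ∘ d_δ = ((c_L ∘̃ d_δ) ⧢ d_L, (c_L ∘̃ d_δ) ⧢ d_R + c_R ∘̃ d_δ)`. -/
noncomputable def compD (c d : FPS × FPS) : FPS × FPS :=
  (shuffle (mixedComp c.1 d) d.1,
    shuffle (mixedComp c.1 d) d.2 + mixedComp c.2 d)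

/-- Shuffle powers. -/
noncomputable def shufflePow (c : FPS) : ℕ → FPS
  | 0 => oneF
  | n + 1 => shuffle c (shufflePow c n)

/-- Shuffle inverse of a non-proper series:
`c^{⧢-1} = (c,∅)⁻¹ · (c')^{⧢*}` with `c' = 1 - c/(c,∅)`. -/
noncomputable def shuffleInv (c : FPS) : FPS :=
  fun w => (c [])⁻¹ * ∑' k : ℕ, shufflePow (oneF - (c [])⁻¹ • c) k w

/-- The map `S_R(e_L, e_R) = ((c_L ∘̃ e)^{⧢-1}, −e_L ⧢ (c_R ∘̃ e))` whose fixed point is the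
composition inverse of `c`. -/
noncomputable def SR (c e : FPS × FPS) : FPS × FPS :=
  (shuffleInv (mixedComp c.1 e), -(shuffle e.1 (mixedComp c.2 e)))

/-!
The mixed composition is a shuffle homomorphism in its first argument,
`(c ⧢ d) ∘̃ e = (c ∘̃ e) ⧢ (d ∘̃ e)`, and satisfies `(c ∘̃ d) ∘̃ e = c ∘̃ (d ∘ e)`. Both follow by
induction on the length of words from the recursions `x₁⁻¹(c ∘̃ d) = d_L ⧢ (x₁⁻¹c ∘̃ d)` and
`x₀⁻¹(c ∘̃ d) = x₀⁻¹c ∘̃ d + d_R ⧢ (x₁⁻¹c ∘̃ d)`, and together they give associativity of `∘`.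

A fixed point `e` of `S_R` satisfies `(c_L ∘̃ e) ⧢ e_L = 1` and `e_R = -e_L ⧢ (c_R ∘̃ e)`, which
say exactly that `c ∘ e = (1, 0)`. The coefficient of a word `w` in `(S_R e)_L` depends on `e`
only through strictly shorter words, while in `(S_R e)_R` it also involves `e_L` at `w`; so
`S_R ∘ S_R` is a contraction and `S_R` has a unique fixed point. As `e` is again non-proper it has
a right inverse `f`, and `c = (c ∘ e) ∘ f = c ∘ (e ∘ f) = f`, so `e` is a two-sided inverse.
-/

namespace FPS

open Finset Function

def leftShift (x : Bool) (c : FPS) : FPS := fun u => c (x :: u)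

section Shuffle

variable (r : ℝ) (a a' b c : FPS) (x : Bool) (w : List Bool)

@[simp] lemma leftShift_apply (u : List Bool) : leftShift x a u = a (x :: u) := rfl

lemma leftShift_add : leftShift x (a + b) = leftShift x a + leftShift x b := rfl

lemma leftShift_smul : leftShift x (r • a) = r • leftShift x a := rfl

lemma leftShift_oneF : leftShift x oneF = 0 := rfl

lemma shuffle_nil : shuffle a b [] = a [] * b [] := rfl

lemma shuffle_cons :
    shuffle a b (x :: w) = shuffle (leftShift x a) b w + shuffle a (leftShift x b) w := rfl

lemma leftShift_shuffle :
    leftShift x (shuffle a b) = shuffle (leftShift x a) b + shuffle a (leftShift x b) := rfl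

lemma shuffle_comm : shuffle a b = shuffle b a := by
  funext w
  induction w generalizing a b with
  | nil => exact mul_comm _ _
  | cons x w ih => rw [shuffle_cons, shuffle_cons, ih, ih a, add_comm]

lemma shuffle_add_left : shuffle (a + a') b = shuffle a b + shuffle a' b := by
  funext w
  induction w generalizing a a' b with
  | nil => exact add_mul _ _ _
  | cons x w ih =>
    simp only [shuffle_cons, leftShift_add, ih, Pi.add_apply]
    ring

lemma shuffle_smul_left : shuffle (r • a) b = r • shuffle a b := by
  funext w
  induction w generalizing a b with
  | nil => exact mul_assoc _ _ _
  | cons x w ih =>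
    simp only [shuffle_cons, leftShift_smul, ih, Pi.smul_apply, smul_eq_mul]
    ring

lemma shuffle_add_right : shuffle a (b + c) = shuffle a b + shuffle a c := by
  rw [shuffle_comm, shuffle_add_left, shuffle_comm b, shuffle_comm c]

lemma shuffle_smul_right : shuffle a (r • b) = r • shuffle a b := by
  rw [shuffle_comm, shuffle_smul_left, shuffle_comm]

noncomputable def shuffleₗ : FPS →ₗ[ℝ] FPS →ₗ[ℝ] FPS :=
  LinearMap.mk₂ ℝ shuffle shuffle_add_left shuffle_smul_left shuffle_add_right shuffle_smul_right

lemma shuffle_zero_right : shuffle a 0 = 0 := (shuffleₗ a).map_zero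

lemma shuffle_zero_left : shuffle 0 b = 0 := shuffleₗ.map_zero₂ b

lemma shuffle_neg_right : shuffle a (-b) = -shuffle a b := (shuffleₗ a).map_neg b

lemma shuffle_sub_left : shuffle (a - a') b = shuffle a b - shuffle a' b :=
  shuffleₗ.map_sub₂ a a' b

lemma shuffle_sum_right {ι : Type*} (s : Finset ι) (f : ι → FPS) :
    shuffle a (∑ i ∈ s, f i) = ∑ i ∈ s, shuffle a (f i) :=
  map_sum (shuffleₗ a) f s

lemma shuffle_oneF_left : shuffle oneF b = b := by
  funext w
  induction w generalizing b with
  | nil => exact one_mul _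
  | cons x w ih =>
    rw [shuffle_cons, leftShift_oneF, shuffle_zero_left, ih, Pi.zero_apply, zero_add]
    rfl

lemma shuffle_oneF_right : shuffle a oneF = a := by
  rw [shuffle_comm, shuffle_oneF_left]

lemma shuffle_assoc : shuffle (shuffle a b) c = shuffle a (shuffle b c) := by
  funext w
  induction w generalizing a b c with
  | nil => exact mul_assoc _ _ _
  | cons x w ih =>
    simp only [shuffle_cons, leftShift_shuffle, shuffle_add_left, shuffle_add_right, Pi.add_apply,
      ih]
    ring

lemma shuffle_left_comm : shuffle a (shuffle b c) = shuffle b (shuffle a c) := by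
  rw [← shuffle_assoc, shuffle_comm a, shuffle_assoc]

end Shuffle

section Truncation

lemma shuffle_apply_congr {a a' b b' : FPS} (w : List Bool)
    (ha : ∀ u : List Bool, u.length ≤ w.length → a u = a' u)
    (hb : ∀ u : List Bool, u.length ≤ w.length → b u = b' u) :
    shuffle a b w = shuffle a' b' w := by
  induction w generalizing a a' b b' with
  | nil => exact congr_arg₂ (· * ·) (ha [] le_rfl) (hb [] le_rfl)
  | cons x w ih =>
    have shift {f f' : FPS} (hf : ∀ u : List Bool, u.length ≤ (x :: w).length → f u = f' u) :
        ∀ u : List Bool, u.length ≤ w.length → leftShift x f u = leftShift x f' u :=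
      fun u hu => hf (x :: u) (by simpa using hu)
    have drop {f f' : FPS} (hf : ∀ u : List Bool, u.length ≤ (x :: w).length → f u = f' u) :
        ∀ u : List Bool, u.length ≤ w.length → f u = f' u :=
      fun u hu => hf u (by simp; omega)
    rw [shuffle_cons, shuffle_cons, ih (shift ha) (drop hb), ih (drop ha) (shift hb)]

lemma shuffle_apply_congr_right (a : FPS) {b b' : FPS} (w : List Bool)
    (hb : ∀ u : List Bool, u.length ≤ w.length → b u = b' u) :
    shuffle a b w = shuffle a b' w :=
  shuffle_apply_congr w (fun _ _ => rfl) hb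

def VanishesBelow (n : ℕ) (a : FPS) : Prop := ∀ u : List Bool, u.length < n → a u = 0

lemma vanishesBelow_zero (a : FPS) : VanishesBelow 0 a :=
  fun _ hu => absurd hu (Nat.not_lt_zero _)

lemma VanishesBelow.add {n : ℕ} {a b : FPS} (ha : VanishesBelow n a) (hb : VanishesBelow n b) :
    VanishesBelow n (a + b) := fun u hu => by simp [ha u hu, hb u hu]

lemma VanishesBelow.pre {n : ℕ} {a : FPS} (ha : VanishesBelow n a) (x : Bool) :
    VanishesBelow (n + 1) (pre x a) := by
  rintro (_ | ⟨y, u⟩) hu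
  · rfl
  · show (if y = x then a u else 0) = 0
    rw [ha u (by simpa using hu), ite_self]

/-- Every word of the shuffle of `u` and `v` has length `|u| + |v|`. -/
lemma VanishesBelow.shuffle {p q : ℕ} {a b : FPS} (ha : VanishesBelow p a)
    (hb : VanishesBelow q b) : VanishesBelow (p + q) (shuffle a b) := by
  intro w hw
  induction w generalizing a b p q with
  | nil =>
    rcases Nat.eq_zero_or_pos p with rfl | hp
    · rw [shuffle_nil, hb [] (by simpa using hw), mul_zero]
    · rw [shuffle_nil, ha [] hp, zero_mul]
  | cons x w ih =>
    have shift {n : ℕ} {f : FPS} (hf : VanishesBelow n f) : VanishesBelow (n - 1) (leftShift x f) :=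
      fun u hu => hf (x :: u) (by simp; omega)
    simp only [List.length_cons] at hw
    rw [shuffle_cons, ih (shift ha) hb (by omega), ih ha (shift hb) (by omega), add_zero]

lemma vanishesBelow_shufflePow {g : FPS} (hg : g [] = 0) (k : ℕ) :
    VanishesBelow k (shufflePow g k) := by
  induction k with
  | zero => exact vanishesBelow_zero _
  | succ k ih =>
    have hg' : VanishesBelow 1 g := fun u hu => by
      rw [List.length_eq_zero_iff.mp (Nat.lt_one_iff.mp hu), hg]
    have := hg'.shuffle ih
    rwa [add_comm] at this

lemma shufflePow_apply_congr {g g' : FPS} (w : List Bool)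
    (h : ∀ u : List Bool, u.length ≤ w.length → g u = g' u) (k : ℕ) :
    shufflePow g k w = shufflePow g' k w := by
  induction k generalizing w with
  | zero => rfl
  | succ k ih =>
    exact shuffle_apply_congr w h fun u hu => ih u fun v hv => h v (hv.trans hu)

end Truncation

section ShuffleInverse

lemma shufflePow_succ (g : FPS) (k : ℕ) : shufflePow g (k + 1) = shuffle g (shufflePow g k) := rfl

lemma shuffle_sub_geom_sum (g : FPS) (n : ℕ) :
    shuffle (oneF - g) (∑ k ∈ range n, shufflePow g k) = oneF - shufflePow g n := by
  induction n with
  | zero => simp [shuffle_zero_right, shufflePow]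
  | succ n ih =>
    rw [sum_range_succ, shuffle_add_right, ih, shuffle_sub_left, shuffle_oneF_left, shufflePow_succ]
    abel

variable {f : FPS} (hf : f [] ≠ 0)
include hf

lemma oneF_sub_inv_smul_apply_nil : (oneF - (f [])⁻¹ • f) [] = 0 := by
  simp [oneF, hf]

lemma shuffleInv_apply_eq_sum {w : List Bool} {N : ℕ} (hw : w.length < N) :
    shuffleInv f w = (f [])⁻¹ * ∑ k ∈ range N, shufflePow (oneF - (f [])⁻¹ • f) k w := by
  rw [shuffleInv, tsum_eq_sum]
  intro k hk
  exact vanishesBelow_shufflePow (oneF_sub_inv_smul_apply_nil hf) k w (by simp at hk; omega)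

lemma shuffleInv_apply_nil : shuffleInv f [] = (f [])⁻¹ := by
  simp [shuffleInv_apply_eq_sum hf (w := []) (N := 1) one_pos, shufflePow, oneF]

lemma shuffle_shuffleInv : shuffle f (shuffleInv f) = oneF := by
  set r := f []
  set g := oneF - r⁻¹ • f
  have hfg : f = r • (oneF - g) := by simp [g, smul_smul, mul_inv_cancel₀ hf]
  funext w
  calc shuffle f (shuffleInv f) w
      = shuffle f (r⁻¹ • ∑ k ∈ range (w.length + 1), shufflePow g k) w :=
        shuffle_apply_congr_right f w fun u hu => by
          simp [shuffleInv_apply_eq_sum hf (Nat.lt_succ_of_le hu), g, r]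
    _ = (oneF - shufflePow g (w.length + 1)) w := by
        rw [shuffle_smul_right, hfg, shuffle_smul_left, smul_smul, inv_mul_cancel₀ hf, one_smul,
          shuffle_sub_geom_sum]
    _ = oneF w := by
        have hvanish : shufflePow g (w.length + 1) w = 0 :=
          vanishesBelow_shufflePow (oneF_sub_inv_smul_apply_nil hf) _ w (Nat.lt_succ_self _)
        rw [Pi.sub_apply, hvanish, sub_zero]

end ShuffleInverse

lemma shuffleInv_apply_congr {f f' : FPS} (w : List Bool)
    (h : ∀ u : List Bool, u.length ≤ w.length → f u = f' u) :
    shuffleInv f w = shuffleInv f' w := by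
  have h₀ : f [] = f' [] := h [] (Nat.zero_le _)
  simp only [shuffleInv, h₀]
  congr 1
  exact tsum_congr fun k => shufflePow_apply_congr w (fun u hu => by simp [h u hu]) k

@[elab_as_elim]
lemma induction_on_length {α : Type*} {motive : List α → Prop} (nil : motive [])
    (cons : ∀ x w, (∀ u : List α, u.length ≤ w.length → motive u) → motive (x :: w))
    (w : List α) : motive w := by
  induction hn : w.length using Nat.strong_induction_on generalizing w with
  | _ n ih =>
    cases w with
    | nil => exact nil
    | cons x w => exact cons x w fun u hu => ih u.length (by simp at hn; omega) u rfl

section MixedComposition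

noncomputable def wordsUpTo (n : ℕ) : Finset (List Bool) := (List.finite_length_le Bool n).toFinset

lemma mem_wordsUpTo {n : ℕ} {η : List Bool} : η ∈ wordsUpTo n ↔ η.length ≤ n := by
  simp [wordsUpTo]

lemma sum_wordsUpTo_succ (F : List Bool → ℝ) (n : ℕ) :
    ∑ η ∈ wordsUpTo (n + 1), F η
      = F [] + ∑ η ∈ wordsUpTo n, (F (false :: η) + F (true :: η)) := by
  have hsplit : wordsUpTo (n + 1) = insert []
      ((wordsUpTo n).map ⟨List.cons false, List.cons_injective⟩ ∪
        (wordsUpTo n).map ⟨List.cons true, List.cons_injective⟩) := by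
    ext (_ | ⟨x, η⟩)
    · simp [mem_wordsUpTo]
    · cases x <;> simp [mem_wordsUpTo]
  rw [hsplit, sum_insert (by simp), sum_union (by simp [disjoint_left]), sum_map, sum_map,
    sum_add_distrib]
  rfl

variable (c : FPS) (d : FPS × FPS)

lemma vanishesBelow_phiW (η : List Bool) (e : FPS) : VanishesBelow η.length (phiW d η e) := by
  induction η with
  | nil => exact vanishesBelow_zero _
  | cons x η ih =>
    have hsh (a : FPS) : VanishesBelow η.length (shuffle a (phiW d η e)) := by
      simpa using (vanishesBelow_zero a).shuffle ih
    cases x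
    · exact ih.pre x₀
    · exact ((hsh d.1).pre x₁).add ((hsh d.2).pre x₀)

lemma mixedComp_apply_eq_sum {w : List Bool} {n : ℕ} (hw : w.length ≤ n) :
    mixedComp c d w = ∑ η ∈ wordsUpTo n, c η * phiW d η oneF w := by
  refine tsum_eq_sum fun η hη => ?_
  rw [vanishesBelow_phiW d η oneF w (by rw [mem_wordsUpTo] at hη; omega), mul_zero]

lemma mixedComp_apply_nil : mixedComp c d [] = c [] := by
  rw [mixedComp, tsum_eq_single []]
  · exact mul_one _
  · intro η hη
    rw [vanishesBelow_phiW d η oneF [] (List.length_pos_iff.mpr hη), mul_zero]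

lemma mixedComp_oneF : mixedComp oneF d = oneF := by
  funext w
  rw [mixedComp, tsum_eq_single []]
  · exact one_mul _
  · rintro (_ | ⟨x, η⟩) hη
    · exact absurd rfl hη
    · exact zero_mul _

lemma mixedComp_zero : mixedComp 0 d = 0 := by
  funext w
  simp [mixedComp]

lemma mixedComp_add (c' : FPS) : mixedComp (c + c') d = mixedComp c d + mixedComp c' d := by
  funext w
  simp only [Pi.add_apply, mixedComp_apply_eq_sum _ d le_rfl, add_mul, sum_add_distrib]

lemma shuffle_mixedComp_apply (a : FPS) (w : List Bool) :
    shuffle a (mixedComp c d) w = ∑ η ∈ wordsUpTo w.length, c η * shuffle a (phiW d η oneF) w := by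
  rw [shuffle_apply_congr_right a w (b' := ∑ η ∈ wordsUpTo w.length, c η • phiW d η oneF)
    fun u hu => by simp [mixedComp_apply_eq_sum c d hu, Finset.sum_apply]]
  simp [shuffle_sum_right, Finset.sum_apply, shuffle_smul_right]

lemma mixedComp_apply_cons (y : Bool) (w : List Bool) :
    mixedComp c d (y :: w) = ∑ η ∈ wordsUpTo w.length,
      (c (false :: η) * phiW d (false :: η) oneF (y :: w)
        + c (true :: η) * phiW d (true :: η) oneF (y :: w)) := by
  rw [mixedComp_apply_eq_sum c d le_rfl, List.length_cons, sum_wordsUpTo_succ]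
  simp [phiW, oneF]

lemma mixedComp_apply_cons_true (w : List Bool) :
    mixedComp c d (true :: w) = shuffle d.1 (mixedComp (leftShift true c) d) w := by
  rw [mixedComp_apply_cons, shuffle_mixedComp_apply]
  simp [phiW, pre, x₀, x₁]

lemma mixedComp_apply_cons_false (w : List Bool) :
    mixedComp c d (false :: w) =
      mixedComp (leftShift false c) d w + shuffle d.2 (mixedComp (leftShift true c) d) w := by
  rw [mixedComp_apply_cons, shuffle_mixedComp_apply, mixedComp_apply_eq_sum _ _ le_rfl,
    ← sum_add_distrib]
  simp [phiW, pre, x₀, x₁]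

lemma leftShift_true_mixedComp :
    leftShift true (mixedComp c d) = shuffle d.1 (mixedComp (leftShift true c) d) :=
  funext (mixedComp_apply_cons_true c d)

lemma leftShift_false_mixedComp :
    leftShift false (mixedComp c d) =
      mixedComp (leftShift false c) d + shuffle d.2 (mixedComp (leftShift true c) d) :=
  funext (mixedComp_apply_cons_false c d)

lemma mixedComp_oneF_zero : mixedComp c (oneF, 0) = c := by
  funext w
  induction w generalizing c with
  | nil => exact mixedComp_apply_nil c _
  | cons x w ih =>
    cases x
    · rw [mixedComp_apply_cons_false, ih, shuffle_zero_left, Pi.zero_apply, add_zero]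
      rfl
    · rw [mixedComp_apply_cons_true, shuffle_oneF_left, ih]
      rfl

lemma mixedComp_shuffle (f g : FPS) :
    mixedComp (shuffle f g) d = shuffle (mixedComp f d) (mixedComp g d) := by
  funext w
  induction w using induction_on_length generalizing f g with
  | nil => simp only [mixedComp_apply_nil, shuffle_nil]
  | cons x w ih =>
    have ih' (a f g : FPS) : shuffle a (mixedComp (shuffle f g) d) w
        = shuffle a (shuffle (mixedComp f d) (mixedComp g d)) w :=
      shuffle_apply_congr_right a w fun u hu => ih u hu f g
    cases x
    · rw [mixedComp_apply_cons_false, shuffle_cons, leftShift_false_mixedComp,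
        leftShift_false_mixedComp, leftShift_shuffle, leftShift_shuffle, mixedComp_add,
        mixedComp_add, shuffle_add_right, shuffle_add_left, shuffle_add_right]
      simp only [Pi.add_apply, ih w le_rfl, ih', shuffle_assoc, shuffle_left_comm (mixedComp f d)]
      ring
    · rw [mixedComp_apply_cons_true, shuffle_cons, leftShift_true_mixedComp,
        leftShift_true_mixedComp, leftShift_shuffle, mixedComp_add, shuffle_add_right]
      simp only [Pi.add_apply, ih', shuffle_assoc, shuffle_left_comm (mixedComp f d)]

end MixedComposition

section Composition

lemma compD_fst_apply_nil (c d : FPS × FPS) : (compD c d).1 [] = c.1 [] * d.1 [] := by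
  simp [compD, shuffle_nil, mixedComp_apply_nil]

lemma mixedComp_mixedComp (f : FPS) (b c : FPS × FPS) :
    mixedComp (mixedComp f b) c = mixedComp f (compD b c) := by
  funext w
  induction w using induction_on_length generalizing f with
  | nil => simp only [mixedComp_apply_nil]
  | cons x w ih =>
    have ih' (a : FPS) : shuffle a (mixedComp (mixedComp (leftShift true f) b) c) w
        = shuffle a (mixedComp (leftShift true f) (compD b c)) w :=
      shuffle_apply_congr_right a w fun u hu => ih u hu _
    cases x
    · rw [mixedComp_apply_cons_false, mixedComp_apply_cons_false, leftShift_false_mixedComp,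
        leftShift_true_mixedComp, mixedComp_add, mixedComp_shuffle, mixedComp_shuffle,
        ← shuffle_assoc, shuffle_comm c.2, Pi.add_apply, ih w le_rfl, ih', ih']
      simp only [compD, shuffle_add_left, Pi.add_apply, shuffle_assoc]
      ring
    · rw [mixedComp_apply_cons_true, mixedComp_apply_cons_true, leftShift_true_mixedComp,
        mixedComp_shuffle, ← shuffle_assoc, shuffle_comm c.1, ih']
      rfl

lemma compD_assoc (a b c : FPS × FPS) : compD (compD a b) c = compD a (compD b c) := by
  simp only [compD, mixedComp_add, mixedComp_shuffle, mixedComp_mixedComp, shuffle_add_right,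
    shuffle_assoc, add_assoc]

lemma compD_oneF_zero (c : FPS × FPS) : compD c (oneF, 0) = c := by
  simp [compD, mixedComp_oneF_zero, shuffle_oneF_right, shuffle_zero_right]

lemma oneF_zero_compD (d : FPS × FPS) : compD (oneF, 0) d = d := by
  simp [compD, mixedComp_oneF, mixedComp_zero, shuffle_oneF_left]

end Composition

section Contraction

variable {α β : Type*}

def AgreeBelow (n : ℕ) (e e' : (List α → β) × (List α → β)) : Prop :=
  ∀ w : List α, w.length < n → e.1 w = e'.1 w ∧ e.2 w = e'.2 w

variable {e e' e'' : (List α → β) × (List α → β)}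

lemma agreeBelow_zero (e e' : (List α → β) × (List α → β)) : AgreeBelow 0 e e' :=
  fun _ hw => absurd hw (Nat.not_lt_zero _)

lemma AgreeBelow.mono {m n : ℕ} (h : AgreeBelow n e e') (hmn : m ≤ n) : AgreeBelow m e e' :=
  fun w hw => h w (hw.trans_le hmn)

lemma AgreeBelow.symm {n : ℕ} (h : AgreeBelow n e e') : AgreeBelow n e' e :=
  fun w hw => ⟨(h w hw).1.symm, (h w hw).2.symm⟩

lemma AgreeBelow.trans {n : ℕ} (h : AgreeBelow n e e') (h' : AgreeBelow n e' e'') :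
    AgreeBelow n e e'' :=
  fun w hw => ⟨(h w hw).1.trans (h' w hw).1, (h w hw).2.trans (h' w hw).2⟩

lemma eq_of_forall_agreeBelow (h : ∀ n, AgreeBelow n e e') : e = e' :=
  Prod.ext (funext fun w => (h _ w w.length.lt_succ_self).1)
    (funext fun w => (h _ w w.length.lt_succ_self).2)

variable {T : (List α → β) × (List α → β) → (List α → β) × (List α → β)}

lemma agreeBelow_iterate_of_agreeBelow_succ
    (hT : ∀ n e e', AgreeBelow n e e' → AgreeBelow (n + 1) (T e) (T e'))
    (e : (List α → β) × (List α → β)) (n k : ℕ) :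
    AgreeBelow n (T^[n] e) (T^[n + k] e) := by
  have hstep (n : ℕ) : AgreeBelow n (T^[n] e) (T^[n + 1] e) := by
    induction n with
    | zero => exact agreeBelow_zero _ _
    | succ n ih =>
      rw [iterate_succ_apply', iterate_succ_apply' T (n + 1)]
      exact hT n _ _ ih
  induction k with
  | zero => exact fun _ _ => ⟨rfl, rfl⟩
  | succ k ih => exact ih.trans ((hstep (n + k)).mono (by omega))

lemma eq_of_agreeBelow_succ (hT : ∀ n e e', AgreeBelow n e e' → AgreeBelow (n + 1) (T e) (T e'))
    {p q : (List α → β) × (List α → β)} (hp : T p = p) (hq : T q = q) : p = q := by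
  refine eq_of_forall_agreeBelow fun n => ?_
  induction n with
  | zero => exact agreeBelow_zero _ _
  | succ n ih => simpa only [hp, hq] using hT n p q ih

/-- Banach's fixed point theorem for the ultrametric of agreement on short words. -/
theorem existsUnique_fixed_of_agreeBelow_succ [Nonempty β]
    (hT : ∀ n e e', AgreeBelow n e e' → AgreeBelow (n + 1) (T e) (T e')) :
    ∃! p, T p = p := by
  let e₀ : (List α → β) × (List α → β) := Classical.arbitrary _
  let p : (List α → β) × (List α → β) :=
    (fun w => (T^[w.length + 1] e₀).1 w, fun w => (T^[w.length + 1] e₀).2 w)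
  have hp (n : ℕ) : AgreeBelow n p (T^[n] e₀) := fun w hw => by
    have := agreeBelow_iterate_of_agreeBelow_succ hT e₀ (w.length + 1) (n - (w.length + 1))
    rw [Nat.add_sub_cancel' (by omega)] at this
    exact this w w.length.lt_succ_self
  have hTp : T p = p := eq_of_forall_agreeBelow fun n => by
    have h := hT n _ _ (hp n)
    rw [← iterate_succ_apply' T] at h
    exact (h.trans (hp (n + 1)).symm).mono n.le_succ
  exact ⟨p, hTp, fun q hq => eq_of_agreeBelow_succ hT hq hTp⟩

end Contraction

lemma existsUnique_eq_of_existsUnique_comp_self {γ : Type*} {f : γ → γ}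
    (h : ∃! x, f (f x) = x) : ∃! x, f x = x := by
  obtain ⟨p, hp, huniq⟩ := h
  have hfp : f p = p := huniq (f p) (congr_arg f hp)
  exact ⟨p, hfp, fun q hq => huniq q (show f (f q) = q by rw [hq, hq])⟩

section SR

variable (c : FPS × FPS) {d d' e e' : FPS × FPS} {n : ℕ}

lemma phiW_apply_congr (η : List Bool) (f : FPS) (w : List Bool) (h : AgreeBelow w.length d d') :
    phiW d η f w = phiW d' η f w := by
  induction η generalizing w with
  | nil => rfl
  | cons x η ih =>
    cases w with
    | nil =>
      rw [vanishesBelow_phiW d _ f [] (by simp), vanishesBelow_phiW d' _ f [] (by simp)]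
    | cons y u =>
      have hφ (v : List Bool) (hv : v.length ≤ u.length) : phiW d η f v = phiW d' η f v :=
        ih v (h.mono (by simp; omega))
      have hd (v : List Bool) (hv : v.length ≤ u.length) : d.1 v = d'.1 v ∧ d.2 v = d'.2 v :=
        h v (by simp; omega)
      cases x <;> simp [phiW, pre, hφ u le_rfl, shuffle_apply_congr u (fun v hv => (hd v hv).1) hφ,
        shuffle_apply_congr u (fun v hv => (hd v hv).2) hφ]

lemma mixedComp_apply_congr (f : FPS) {w : List Bool} (h : AgreeBelow w.length d d') :
    mixedComp f d w = mixedComp f d' w :=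
  tsum_congr fun η => by rw [phiW_apply_congr η oneF w h]

lemma SR_fst_apply_congr (h : AgreeBelow n e e') {w : List Bool} (hw : w.length ≤ n) :
    (SR c e).1 w = (SR c e').1 w :=
  shuffleInv_apply_congr w fun _ hu => mixedComp_apply_congr c.1 (h.mono (hu.trans hw))

lemma SR_snd_apply_congr {w : List Bool}
    (h₁ : ∀ u : List Bool, u.length ≤ w.length → e.1 u = e'.1 u) (h : AgreeBelow w.length e e') :
    (SR c e).2 w = (SR c e').2 w :=
  congr_arg Neg.neg <| shuffle_apply_congr w h₁ fun _ hu => mixedComp_apply_congr c.2 (h.mono hu)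

lemma SR_agreeBelow (h : AgreeBelow n e e') : AgreeBelow n (SR c e) (SR c e') := fun _ hw =>
  ⟨SR_fst_apply_congr c h hw.le,
    SR_snd_apply_congr c (fun u hu => (h u (hu.trans_lt hw)).1) (h.mono hw.le)⟩

lemma SR_SR_agreeBelow_succ (h : AgreeBelow n e e') :
    AgreeBelow (n + 1) (SR c (SR c e)) (SR c (SR c e')) := fun w hw =>
  ⟨SR_fst_apply_congr c (SR_agreeBelow c h) (by omega),
    SR_snd_apply_congr c (fun _ hu => SR_fst_apply_congr c h (by omega))
      ((SR_agreeBelow c h).mono (by omega))⟩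

lemma existsUnique_SR_eq : ∃! e, SR c e = e :=
  existsUnique_eq_of_existsUnique_comp_self <|
    existsUnique_fixed_of_agreeBelow_succ fun _ _ _ => SR_SR_agreeBelow_succ c

variable {c} (hc : c.1 [] ≠ 0) (he : SR c e = e)
include hc he

lemma fst_apply_nil_ne_zero_of_SR_eq : e.1 [] ≠ 0 := by
  have hm : mixedComp c.1 e [] ≠ 0 := by rwa [mixedComp_apply_nil]
  rw [← he]
  show shuffleInv (mixedComp c.1 e) [] ≠ 0
  rw [shuffleInv_apply_nil hm]
  exact inv_ne_zero hm

lemma compD_right_inv_of_SR_eq : compD c e = (oneF, 0) := by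
  have hm : mixedComp c.1 e [] ≠ 0 := by rwa [mixedComp_apply_nil]
  have hL : shuffle (mixedComp c.1 e) e.1 = oneF := by
    rw [← congr_arg Prod.fst he]
    exact shuffle_shuffleInv hm
  refine Prod.ext hL ?_
  show shuffle (mixedComp c.1 e) e.2 + mixedComp c.2 e = 0
  have hR : e.2 = -shuffle e.1 (mixedComp c.2 e) := (congr_arg Prod.snd he).symm
  rw [hR, shuffle_neg_right, ← shuffle_assoc, hL, shuffle_oneF_left, neg_add_cancel]

lemma compD_left_inv_of_SR_eq : compD e c = (oneF, 0) := by
  obtain ⟨f, hf, -⟩ := existsUnique_SR_eq e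
  have hef : compD e f = (oneF, 0) :=
    compD_right_inv_of_SR_eq (fst_apply_nil_ne_zero_of_SR_eq hc he) hf
  have hfc : f = c := calc
    f = compD (compD c e) f := by rw [compD_right_inv_of_SR_eq hc he, oneF_zero_compD]
    _ = c := by rw [compD_assoc, hef, compD_oneF_zero]
  rwa [hfc] at hef

end SR

end FPS

/-- The pairs `(c_L, c_R)` with `c_L` non-proper form a group under the composition
product with identity `(1,0)`; the inverse of `c` is the unique fixed point of the
contraction `S_R`. -/
theorem compD_group_inverse :
    (∀ c d : FPS × FPS, c.1 [] ≠ 0 → d.1 [] ≠ 0 → (compD c d).1 [] ≠ 0) ∧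
    (∀ c : FPS × FPS, c.1 [] ≠ 0 →
      (∃! e : FPS × FPS, SR c e = e) ∧
      (∀ e : FPS × FPS, SR c e = e →
        e.1 [] ≠ 0 ∧ compD c e = (oneF, (0 : FPS)) ∧ compD e c = (oneF, (0 : FPS)))) := by
  refine ⟨fun c d hc hd => ?_, fun c hc => ⟨FPS.existsUnique_SR_eq c, fun e he => ?_⟩⟩
  · rw [FPS.compD_fst_apply_nil]
    exact mul_ne_zero hc hd
  · exact ⟨FPS.fst_apply_nil_ne_zero_of_SR_eq hc he, FPS.compD_right_inv_of_SR_eq hc he,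
      FPS.compD_left_inv_of_SR_eq hc he⟩
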